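/- arXiv:2601.12849 — 3 statements merged into one kernel-verified Lean document; each statement's English description precedes it below -/
import Mathlib

section
/- Let I be an instance in which every good is positively valued by at least one agent, and let I' be obtained from I by adding one new agent d with zero valuation for every good. Then I admits a complete allocation that is both EFX and Pareto-optimal if and only if I' does. -/
/-- An allocation is complete if every good belongs to exactly one bundle. -/
def IsCompleteAlloc {N : Type*} {m : ℕ} (A : N → Finset (Fin m)) : Prop :=
  ∀ g : Fin m, ∃! i : N, g ∈ A i

/-- EFX: envy is eliminated after removing any positively-valued good. -/
def IsEFX {N : Type*} {m : ℕ} (v : N → Fin m → ℝ) (A : N → Finset (Fin m)) : Prop :=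
  ∀ i j : N, A j ≠ ∅ → ∀ g ∈ A j, 0 < v i g →
    ∑ h ∈ (A j).erase g, v i h ≤ ∑ h ∈ A i, v i h

/-- Pareto optimality: no complete allocation weakly improves everyone and strictly
improves someone. -/
def IsPO {N : Type*} {m : ℕ} (v : N → Fin m → ℝ) (A : N → Finset (Fin m)) : Prop :=
  ¬ ∃ B : N → Finset (Fin m), IsCompleteAlloc B ∧
      (∀ i, ∑ h ∈ A i, v i h ≤ ∑ h ∈ B i, v i h) ∧
      (∃ i, ∑ h ∈ A i, v i h < ∑ h ∈ B i, v i h)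

/-- Adding a single agent with identically-zero valuations preserves
the existence of an allocation that is both EFX and Pareto-optimal, provided every
good is positively valued by some original agent. -/
theorem add_zero_agent_EFX_PO_iff
    (n m : ℕ) (v : Fin n → Fin m → ℝ) (hv : ∀ i g, 0 ≤ v i g)
    (hpos : ∀ g : Fin m, ∃ i : Fin n, 0 < v i g)
    (v' : Fin (n + 1) → Fin m → ℝ)
    (hv' : ∀ (i : Fin (n + 1)) (g : Fin m),
      v' i g = if h : (i : ℕ) < n then v ⟨i, h⟩ g else 0) :
    (∃ A : Fin n → Finset (Fin m), IsCompleteAlloc A ∧ IsEFX v A ∧ IsPO v A) ↔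
    (∃ A' : Fin (n + 1) → Finset (Fin m),
      IsCompleteAlloc A' ∧ IsEFX v' A' ∧ IsPO v' A') := by
  have hvc : ∀ (i : Fin n) (g : Fin m), v' i.castSucc g = v i g := by
    intro i g
    rw [hv']
    simp [Fin.castSucc, Fin.castAdd, Fin.castLE, i.isLt]
  have hvl : ∀ g : Fin m, v' (Fin.last n) g = 0 := by
    intro g; rw [hv']; simp
  have hsum : ∀ (i : Fin n) (S : Finset (Fin m)),
      ∑ h ∈ S, v' i.castSucc h = ∑ h ∈ S, v i h :=
    fun i S => Finset.sum_congr rfl (fun h _ => hvc i h)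
  have hsuml : ∀ S : Finset (Fin m), ∑ h ∈ S, v' (Fin.last n) h = 0 :=
    fun S => Finset.sum_eq_zero (fun h _ => hvl h)
  constructor
  · rintro ⟨A, hAC, hAE, hAP⟩
    refine ⟨fun j => Fin.lastCases ∅ A j, ?_, ?_, ?_⟩
    · intro g
      obtain ⟨i, hi, hui⟩ := hAC g
      refine ⟨i.castSucc, by simpa using hi, ?_⟩
      intro j hj
      rcases Fin.eq_castSucc_or_eq_last j with ⟨k, rfl⟩ | rfl
      · simp only [Fin.lastCases_castSucc] at hj
        rw [hui k hj]
      · simp at hj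
    · intro i j hne g hg hpg
      rcases Fin.eq_castSucc_or_eq_last i with ⟨i', rfl⟩ | rfl
      · rcases Fin.eq_castSucc_or_eq_last j with ⟨j', rfl⟩ | rfl
        · simp only [Fin.lastCases_castSucc] at *
          rw [hsum, hsum]
          exact hAE i' j' hne g hg (by rwa [hvc] at hpg)
        · simp at hne
      · rw [hvl] at hpg; exact absurd hpg (lt_irrefl 0)
    · rintro ⟨B', hBC, hBW, i0, hBi⟩
      rcases Fin.eq_castSucc_or_eq_last i0 with ⟨i, rfl⟩ | rfl
      swap
      · rw [hsuml, hsuml] at hBi; exact absurd hBi (lt_irrefl 0)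
      apply hAP
      refine ⟨fun k => if k = i then B' k.castSucc ∪ B' (Fin.last n) else B' k.castSucc,
        ?_, ?_, ?_⟩
      · intro g
        obtain ⟨j, hj, huj⟩ := hBC g
        have hmem : ∀ k : Fin n,
            g ∈ (if k = i then B' k.castSucc ∪ B' (Fin.last n) else B' k.castSucc) →
            g ∈ B' k.castSucc ∨ (k = i ∧ g ∈ B' (Fin.last n)) := by
          intro k hk
          by_cases h : k = i
          · rw [if_pos h] at hk
            rcases Finset.mem_union.1 hk with h1 | h1
            · exact Or.inl h1
            · exact Or.inr ⟨h, h1⟩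
          · rw [if_neg h] at hk; exact Or.inl hk
        rcases Fin.eq_castSucc_or_eq_last j with ⟨k0, rfl⟩ | rfl
        · refine ⟨k0, ?_, ?_⟩
          · dsimp only
            by_cases h : k0 = i
            · rw [if_pos h]; exact Finset.mem_union_left _ hj
            · rw [if_neg h]; exact hj
          · intro k hk
            rcases hmem k hk with h1 | ⟨rfl, h1⟩
            · exact Fin.castSucc_injective n (huj _ h1)
            · exact absurd (huj _ h1) (Fin.ne_last_of_lt (Fin.castSucc_lt_last k0)).symm
        · refine ⟨i, ?_, ?_⟩
          · dsimp only
            rw [if_pos rfl]; exact Finset.mem_union_right _ hj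
          · intro k hk
            rcases hmem k hk with h1 | ⟨rfl, h1⟩
            · exact absurd (huj _ h1) (Fin.ne_last_of_lt (Fin.castSucc_lt_last k))
            · rfl
      · intro k
        have h1 := hBW k.castSucc
        simp only [Fin.lastCases_castSucc] at h1
        rw [hsum, hsum] at h1
        refine le_trans h1 ?_
        dsimp only
        by_cases h : k = i
        · rw [if_pos h]
          exact Finset.sum_le_sum_of_subset_of_nonneg Finset.subset_union_left
            (fun g _ _ => hv k g)
        · rw [if_neg h]
      · refine ⟨i, ?_⟩
        simp only [Fin.lastCases_castSucc] at hBi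
        rw [hsum, hsum] at hBi
        refine lt_of_lt_of_le hBi ?_
        dsimp only
        rw [if_pos rfl]
        exact Finset.sum_le_sum_of_subset_of_nonneg Finset.subset_union_left
          (fun g _ _ => hv i g)
  · rintro ⟨A', hC, hE, hP⟩
    have hlast : A' (Fin.last n) = ∅ := by
      by_contra hne
      obtain ⟨g0, hg0⟩ := Finset.nonempty_iff_ne_empty.2 hne
      obtain ⟨i, hig⟩ := hpos g0
      have hdisj : ∀ g ∈ A' (Fin.last n), g ∉ A' i.castSucc := by
        intro g hg hg'
        obtain ⟨j, _, huj⟩ := hC g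
        have h1 := huj _ hg
        have h2 := huj _ hg'
        exact Fin.ne_last_of_lt (Fin.castSucc_lt_last i) (h2.trans h1.symm)
      apply hP
      refine ⟨fun j => if j = i.castSucc then A' j ∪ A' (Fin.last n)
        else if j = Fin.last n then ∅ else A' j, ?_, ?_, ?_⟩
      · intro g
        obtain ⟨j, hj, huj⟩ := hC g
        have hmem : ∀ k, g ∈ (if k = i.castSucc then A' k ∪ A' (Fin.last n)
            else if k = Fin.last n then ∅ else A' k) →
            (g ∈ A' k ∧ k ≠ Fin.last n) ∨ (k = i.castSucc ∧ g ∈ A' (Fin.last n)) := by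
          intro k hk
          by_cases h : k = i.castSucc
          · rw [if_pos h] at hk
            rcases Finset.mem_union.1 hk with h1 | h1
            · exact Or.inl ⟨h1, by
                rw [h]; exact Fin.ne_last_of_lt (Fin.castSucc_lt_last i)⟩
            · exact Or.inr ⟨h, h1⟩
          · rw [if_neg h] at hk
            by_cases h2 : k = Fin.last n
            · rw [if_pos h2] at hk; simp at hk
            · rw [if_neg h2] at hk; exact Or.inl ⟨hk, h2⟩
        by_cases hjl : j = Fin.last n
        · subst hjl
          refine ⟨i.castSucc, ?_, ?_⟩
          · dsimp only
            rw [if_pos rfl]; exact Finset.mem_union_right _ hj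
          · intro k hk
            rcases hmem k hk with ⟨h1, h2⟩ | ⟨h1, _⟩
            · exact absurd (huj _ h1) h2
            · exact h1
        · refine ⟨j, ?_, ?_⟩
          · dsimp only
            by_cases h : j = i.castSucc
            · rw [if_pos h]; exact Finset.mem_union_left _ hj
            · rw [if_neg h, if_neg hjl]; exact hj
          · intro k hk
            rcases hmem k hk with ⟨h1, _⟩ | ⟨h1, h2⟩
            · exact huj _ h1
            · exact absurd (huj _ h2).symm hjl
      · intro j
        dsimp only
        by_cases h : j = i.castSucc
        · subst h
          rw [if_pos rfl]
          exact Finset.sum_le_sum_of_subset_of_nonneg Finset.subset_union_left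
            (fun g _ _ => by rw [hvc]; exact hv i g)
        · rw [if_neg h]
          by_cases h2 : j = Fin.last n
          · subst h2; rw [hsuml, hsuml]
          · rw [if_neg h2]
      · refine ⟨i.castSucc, ?_⟩
        dsimp only
        rw [if_pos rfl, hsum, hsum,
          Finset.sum_union (Finset.disjoint_right.2 hdisj)]
        have h1 : v i g0 ≤ ∑ h ∈ A' (Fin.last n), v i h :=
          Finset.single_le_sum (fun g _ => hv i g) hg0
        linarith [hig]
    refine ⟨fun k => A' k.castSucc, ?_, ?_, ?_⟩
    · intro g
      obtain ⟨j, hj, huj⟩ := hC g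
      rcases Fin.eq_castSucc_or_eq_last j with ⟨k0, rfl⟩ | rfl
      · exact ⟨k0, hj, fun k hk => Fin.castSucc_injective n (huj _ hk)⟩
      · rw [hlast] at hj; simp at hj
    · intro i j hne g hg hpg
      have := hE i.castSucc j.castSucc hne g hg (by rwa [hvc])
      rwa [hsum, hsum] at this
    · rintro ⟨B, hBC, hBW, i0, hBi⟩
      apply hP
      refine ⟨fun j => Fin.lastCases ∅ B j, ?_, ?_, ?_⟩
      · intro g
        obtain ⟨k, hk, huk⟩ := hBC g
        refine ⟨k.castSucc, by simpa using hk, ?_⟩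
        intro j hj
        rcases Fin.eq_castSucc_or_eq_last j with ⟨k', rfl⟩ | rfl
        · simp only [Fin.lastCases_castSucc] at hj
          rw [huk k' hj]
        · simp at hj
      · intro j
        rcases Fin.eq_castSucc_or_eq_last j with ⟨k, rfl⟩ | rfl
        · simp only [Fin.lastCases_castSucc]
          rw [hsum, hsum]; exact hBW k
        · rw [hsuml, hsuml]
      · refine ⟨i0.castSucc, ?_⟩
        simp only [Fin.lastCases_castSucc]
        rw [hsum, hsum]; exact hBi
end

section
/- Let I be an instance in which every good is positively valued by at least one agent, and let I⁺ be obtained by adding one new agent d and two new goods x, y, where d values x and y at 1 each and all other goods at 0, and every original agent values x and y at 0. Then I admits a complete allocation that is both EFX and Pareto-optimal if and only if I⁺ does; moreover, in any EFX and PO allocation for I⁺, agent d receives exactly {x, y}. -/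
open Finset

section Reallocation

variable {N : Type*} {k : ℕ}

noncomputable def IsCompleteAlloc.owner {A : N → Finset (Fin k)} (hA : IsCompleteAlloc A)
    (g : Fin k) : N :=
  (hA g).exists.choose

theorem IsCompleteAlloc.owner_eq_of_mem {A : N → Finset (Fin k)} (hA : IsCompleteAlloc A)
    {g : Fin k} {i : N} (hg : g ∈ A i) : hA.owner g = i :=
  (hA g).unique (hA g).exists.choose_spec hg

variable [DecidableEq N]

def bundlesOf (o : Fin k → N) (i : N) : Finset (Fin k) :=
  univ.filter (o · = i)

theorem isCompleteAlloc_bundlesOf (o : Fin k → N) : IsCompleteAlloc (bundlesOf o) :=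
  fun g => ⟨o g, by simp [bundlesOf], fun i hi => by simpa [bundlesOf, eq_comm] using hi⟩

def moveGood (A : N → Finset (Fin k)) (g : Fin k) (t : N) : N → Finset (Fin k) :=
  fun j => if j = t then insert g (A j) else (A j).erase g

theorem IsCompleteAlloc.moveGood {A : N → Finset (Fin k)} (hA : IsCompleteAlloc A)
    (g : Fin k) (t : N) : IsCompleteAlloc (moveGood A g t) := by
  intro h
  have mem_iff : ∀ j, h ∈ _root_.moveGood A g t j ↔ if h = g then j = t else h ∈ A j := by
    intro j
    unfold _root_.moveGood
    split_ifs <;> simp_all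
  simp_rw [mem_iff]
  split_ifs
  · exact existsUnique_eq
  · exact hA h

theorem IsPO.apply_ne_zero_of_mem {w : N → Fin k → ℝ} {A : N → Finset (Fin k)}
    (hP : IsPO w A) (hA : IsCompleteAlloc A) {s t : N} {g : Fin k} (hg : g ∈ A s)
    (ht : 0 < w t g) : w s g ≠ 0 := by
  intro h0
  have hst : s ≠ t := by rintro rfl; exact ht.ne' h0
  have hgt : g ∉ A t := fun hgt => hst ((hA g).unique hg hgt)
  have gain : ∀ j, ∑ h ∈ A j, w j h ≤ ∑ h ∈ moveGood A g t j, w j h := by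
    intro j
    unfold moveGood
    split_ifs with hjt
    · subst hjt
      rw [sum_insert hgt]
      linarith
    · by_cases hjs : j = s
      · subst hjs
        rw [sum_erase _ h0]
      · rw [erase_eq_of_notMem fun hgj => hjs ((hA g).unique hgj hg)]
  refine hP ⟨moveGood A g t, hA.moveGood g t, gain, t, ?_⟩
  simp only [moveGood, if_pos, sum_insert hgt]
  linarith

end Reallocation

theorem Fin.existsUnique_iff_castSucc {n : ℕ} {P : Fin (n + 1) → Prop}
    (hP : ¬ P (Fin.last n)) :
    (∃! j, P j) ↔ ∃! i : Fin n, P i.castSucc := by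
  constructor
  · rintro ⟨j, hj, huniq⟩
    induction j using Fin.lastCases with
    | last => exact absurd hj hP
    | cast i => exact ⟨i, hj, fun i' hi' => Fin.castSucc_injective n (huniq _ hi')⟩
  · rintro ⟨i, hi, huniq⟩
    refine ⟨i.castSucc, hi, fun j hj => ?_⟩
    induction j using Fin.lastCases with
    | last => exact absurd hj hP
    | cast i' => rw [huniq i' hj]

namespace PrivatePair

variable {n m : ℕ}

def newGoods (m : ℕ) : Finset (Fin (m + 2)) := {(Fin.last m).castSucc, Fin.last (m + 1)}

theorem mem_newGoods {h : Fin (m + 2)} : h ∈ newGoods m ↔ m ≤ h := by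
  simp only [newGoods, mem_insert, mem_singleton, Fin.ext_iff, Fin.val_castSucc, Fin.val_last]
  omega

theorem castAdd_notMem_newGoods (g : Fin m) : Fin.castAdd 2 g ∉ newGoods m := by
  simp [mem_newGoods]

theorem exists_castAdd_eq_or_mem_newGoods (h : Fin (m + 2)) :
    (∃ g, Fin.castAdd 2 g = h) ∨ h ∈ newGoods m := by
  by_cases hh : (h : ℕ) < m
  · exact .inl ⟨⟨h, hh⟩, rfl⟩
  · exact .inr (mem_newGoods.2 (not_lt.1 hh))

def padVal (v : Fin n → Fin m → ℝ) (i : Fin (n + 1)) (g : Fin (m + 2)) : ℝ :=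
  if hi : (i : ℕ) < n then
    (if hg : (g : ℕ) < m then v ⟨i, hi⟩ ⟨g, hg⟩ else 0)
  else
    (if (g : ℕ) < m then 0 else 1)

variable {v : Fin n → Fin m → ℝ}

@[simp]
theorem padVal_castSucc_castAdd (i : Fin n) (g : Fin m) :
    padVal v i.castSucc (Fin.castAdd 2 g) = v i g := by
  simp [padVal]

theorem padVal_castSucc_of_mem_newGoods (i : Fin n) {h : Fin (m + 2)} (hh : h ∈ newGoods m) :
    padVal v i.castSucc h = 0 := by
  simp [padVal, not_lt.2 (mem_newGoods.1 hh)]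

theorem padVal_last (h : Fin (m + 2)) :
    padVal v (Fin.last n) h = if h ∈ newGoods m then 1 else 0 := by
  have hn : ¬ ((Fin.last n : Fin (n + 1)) : ℕ) < n := by simp
  rw [padVal, dif_neg hn]
  by_cases hh : (h : ℕ) < m <;> simp [hh, mem_newGoods]

theorem sum_padVal_castSucc (i : Fin n) (T : Finset (Fin (m + 2))) :
    ∑ h ∈ T, padVal v i.castSucc h =
      ∑ g ∈ T.preimage (Fin.castAdd 2) (Fin.castAdd_injective m 2).injOn, v i g := by
  simp_rw [← padVal_castSucc_castAdd (v := v)]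
  refine (sum_preimage _ T _ _ fun h _ hh => padVal_castSucc_of_mem_newGoods i ?_).symm
  exact (exists_castAdd_eq_or_mem_newGoods h).resolve_left hh

theorem sum_padVal_last (T : Finset (Fin (m + 2))) :
    ∑ h ∈ T, padVal v (Fin.last n) h = #(T ∩ newGoods m) := by
  simp_rw [padVal_last, sum_boole, filter_mem_eq_inter]

theorem sum_padVal_last_le (T : Finset (Fin (m + 2))) :
    ∑ h ∈ T, padVal v (Fin.last n) h ≤ ∑ h ∈ newGoods m, padVal v (Fin.last n) h := by
  rw [sum_padVal_last, sum_padVal_last, inter_self]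
  exact_mod_cast card_le_card inter_subset_right

@[simp]
theorem sum_padVal_map (i : Fin n) (S : Finset (Fin m)) :
    ∑ h ∈ S.map (Fin.castAddEmb 2), padVal v i.castSucc h = ∑ g ∈ S, v i g := by
  simp [sum_map]

def pad (A : Fin n → Finset (Fin m)) : Fin (n + 1) → Finset (Fin (m + 2)) :=
  Fin.snoc (α := fun _ => Finset (Fin (m + 2))) (fun i => (A i).map (Fin.castAddEmb 2))
    (newGoods m)

@[simp]
theorem pad_castSucc (A : Fin n → Finset (Fin m)) (i : Fin n) :
    pad A i.castSucc = (A i).map (Fin.castAddEmb 2) :=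
  Fin.snoc_castSucc ..

@[simp]
theorem pad_last (A : Fin n → Finset (Fin m)) : pad A (Fin.last n) = newGoods m :=
  Fin.snoc_last ..

theorem isCompleteAlloc_pad_iff {A : Fin n → Finset (Fin m)} :
    IsCompleteAlloc (pad A) ↔ IsCompleteAlloc A := by
  have owners_castAdd (g : Fin m) :
      (∃! j, Fin.castAdd 2 g ∈ pad A j) ↔ ∃! i, g ∈ A i := by
    rw [Fin.existsUnique_iff_castSucc (by simpa using castAdd_notMem_newGoods g)]
    simp only [pad_castSucc, ← Fin.castAddEmb_apply, mem_map']
  refine ⟨fun hpad g => (owners_castAdd g).1 (hpad _), fun hA h => ?_⟩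
  obtain ⟨g, rfl⟩ | hh := exists_castAdd_eq_or_mem_newGoods h
  · exact (owners_castAdd g).2 (hA g)
  · refine ⟨Fin.last n, by simpa using hh, fun j hj => ?_⟩
    induction j using Fin.lastCases with
    | last => rfl
    | cast i =>
      obtain ⟨g, -, rfl⟩ := mem_map.1 (pad_castSucc A i ▸ hj)
      exact absurd hh (castAdd_notMem_newGoods g)

theorem isEFX_pad_iff {A : Fin n → Finset (Fin m)} :
    IsEFX (padVal v) (pad A) ↔ IsEFX v A := by
  constructor
  · intro hpad i j _ g hg hpos
    have hg' : Fin.castAddEmb 2 g ∈ pad A j.castSucc := by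
      simpa only [pad_castSucc, mem_map'] using hg
    have := hpad i.castSucc j.castSucc (ne_empty_of_mem hg') _ hg' (by simpa using hpos)
    rwa [pad_castSucc, pad_castSucc, ← map_erase, sum_padVal_map, sum_padVal_map] at this
  · intro hA i j _ h hh hpos
    by_cases hij : i = j
    · subst hij
      linarith [sum_erase_add _ (padVal v i) hh]
    induction j using Fin.lastCases with
    | last =>
      induction i using Fin.lastCases with
      | last => exact absurd rfl hij
      | cast a =>
        rw [pad_last] at hh
        exact absurd hpos (padVal_castSucc_of_mem_newGoods a hh).not_gt
    | cast b =>
      obtain ⟨g, hg, rfl⟩ := mem_map.1 (pad_castSucc A b ▸ hh)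
      induction i using Fin.lastCases with
      | last => simp [padVal_last, castAdd_notMem_newGoods] at hpos
      | cast a =>
        rw [pad_castSucc, pad_castSucc, ← map_erase, sum_padVal_map, sum_padVal_map]
        exact hA a b (ne_empty_of_mem hg) g hg (by simpa using hpos)

noncomputable def collapse {B : Fin (n + 1) → Finset (Fin (m + 2))} (hB : IsCompleteAlloc B)
    (a : Fin n) : Fin n → Finset (Fin m) :=
  bundlesOf fun g => Fin.lastCases (motive := fun _ => Fin n) a id (hB.owner (Fin.castAdd 2 g))

theorem sum_le_sum_collapse (hv : ∀ i g, 0 ≤ v i g) {B : Fin (n + 1) → Finset (Fin (m + 2))}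
    (hB : IsCompleteAlloc B) (a i : Fin n) :
    ∑ h ∈ B i.castSucc, padVal v i.castSucc h ≤ ∑ g ∈ collapse hB a i, v i g := by
  rw [sum_padVal_castSucc]
  refine sum_le_sum_of_subset_of_nonneg (fun g hg => ?_) fun g _ _ => hv i g
  simp [collapse, bundlesOf, hB.owner_eq_of_mem (mem_preimage.1 hg)]

theorem isPO_pad_iff (hv : ∀ i g, 0 ≤ v i g) {A : Fin n → Finset (Fin m)} :
    IsPO (padVal v) (pad A) ↔ IsPO v A := by
  constructor
  · rintro hpad ⟨B, hB, hle, a, hlt⟩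
    refine hpad ⟨pad B, isCompleteAlloc_pad_iff.2 hB, fun j => ?_, a.castSucc,
      by simpa using hlt⟩
    induction j using Fin.lastCases with
    | last => simp
    | cast i => simpa using hle i
  · rintro hA ⟨B, hB, hle, i₀, hlt⟩
    induction i₀ using Fin.lastCases with
    | last => exact (sum_padVal_last_le _).not_gt (by simpa using hlt)
    | cast a =>
      refine hA ⟨collapse hB a, isCompleteAlloc_bundlesOf _, fun i => ?_, a, ?_⟩
      · simpa using (hle i.castSucc).trans (sum_le_sum_collapse hv hB a i)
      · simpa using hlt.trans_le (sum_le_sum_collapse hv hB a a)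

noncomputable def unpad (Ap : Fin (n + 1) → Finset (Fin (m + 2))) (i : Fin n) : Finset (Fin m) :=
  (Ap i.castSucc).preimage (Fin.castAdd 2) (Fin.castAdd_injective m 2).injOn

theorem pad_unpad {Ap : Fin (n + 1) → Finset (Fin (m + 2))} (hC : IsCompleteAlloc Ap)
    (hd : Ap (Fin.last n) = newGoods m) : pad (unpad Ap) = Ap := by
  funext j
  induction j using Fin.lastCases with
  | last => rw [pad_last, hd]
  | cast i =>
    ext h
    obtain ⟨g, rfl⟩ | hh := exists_castAdd_eq_or_mem_newGoods h
    · simp only [pad_castSucc, unpad, ← Fin.castAddEmb_apply, mem_map', mem_preimage]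
    · have hi : h ∉ Ap i.castSucc := fun hi =>
        Fin.castSucc_ne_last i ((hC h).unique hi (hd ▸ hh))
      simp only [pad_castSucc, mem_map, hi, iff_false, not_exists, not_and]
      rintro g - rfl
      exact castAdd_notMem_newGoods g hh

theorem eq_newGoods_of_isPO (hpos : ∀ g : Fin m, ∃ i, 0 < v i g)
    {Ap : Fin (n + 1) → Finset (Fin (m + 2))} (hC : IsCompleteAlloc Ap)
    (hP : IsPO (padVal v) Ap) : Ap (Fin.last n) = newGoods m := by
  ext h
  constructor
  · intro hh
    by_contra hnew
    obtain ⟨g, rfl⟩ := (exists_castAdd_eq_or_mem_newGoods h).resolve_right hnew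
    obtain ⟨i, hi⟩ := hpos g
    exact hP.apply_ne_zero_of_mem hC hh (t := i.castSucc) (by simpa using hi)
      (by simp [padVal_last, castAdd_notMem_newGoods])
  · intro hh
    obtain ⟨j, hj, -⟩ := hC h
    have hj_ne := hP.apply_ne_zero_of_mem hC hj (t := Fin.last n) (by simp [padVal_last, hh])
    induction j using Fin.lastCases with
    | last => exact hj
    | cast i => exact absurd (padVal_castSucc_of_mem_newGoods i hh) hj_ne

end PrivatePair

open PrivatePair

/-- Adding a new agent `d` and two new goods `x, y` (valued 1 each
by `d` and 0 by everyone else, with `d` valuing all original goods at 0) preserves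
the existence of an EFX and Pareto-optimal allocation; moreover, in any EFX and PO
allocation of the padded instance agent `d` receives exactly `{x, y}`. -/
theorem add_private_pair_EFX_PO_iff
    (n m : ℕ) (v : Fin n → Fin m → ℝ) (hv : ∀ i g, 0 ≤ v i g)
    (hpos : ∀ g : Fin m, ∃ i : Fin n, 0 < v i g)
    (vp : Fin (n + 1) → Fin (m + 2) → ℝ)
    (hvp : ∀ (i : Fin (n + 1)) (g : Fin (m + 2)),
      vp i g =
        if hi : (i : ℕ) < n then
          (if hg : (g : ℕ) < m then v ⟨i, hi⟩ ⟨g, hg⟩ else 0)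
        else
          (if (g : ℕ) < m then 0 else 1)) :
    ((∃ A : Fin n → Finset (Fin m), IsCompleteAlloc A ∧ IsEFX v A ∧ IsPO v A) ↔
     (∃ Ap : Fin (n + 1) → Finset (Fin (m + 2)),
        IsCompleteAlloc Ap ∧ IsEFX vp Ap ∧ IsPO vp Ap)) ∧
    (∀ Ap : Fin (n + 1) → Finset (Fin (m + 2)),
      IsCompleteAlloc Ap → IsEFX vp Ap → IsPO vp Ap →
        Ap (Fin.last n) = {⟨m, by omega⟩, ⟨m + 1, by omega⟩}) := by
  obtain rfl : vp = padVal v := funext fun i => funext (hvp i)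
  refine ⟨⟨fun ⟨A, hC, hE, hP⟩ => ?_, fun ⟨Ap, hC, hE, hP⟩ => ?_⟩,
    fun Ap hC _ hP => eq_newGoods_of_isPO hpos hC hP⟩
  · exact ⟨pad A, isCompleteAlloc_pad_iff.2 hC, isEFX_pad_iff.2 hE, (isPO_pad_iff hv).2 hP⟩
  · have hAp := pad_unpad hC (eq_newGoods_of_isPO hpos hC hP)
    rw [← hAp] at hC hE hP
    exact ⟨unpad Ap, isCompleteAlloc_pad_iff.1 hC, isEFX_pad_iff.1 hE, (isPO_pad_iff hv).1 hP⟩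
end

section
/- In the instance of the previous construction, every EFX₀ complete allocation A in which all agents have positive utility satisfies |A_1 ∩ S| ≤ 2, where A_1 is agent 1's bundle and S is the set of c+1 ≤ 4 common goods. -/
/-- In the instance with goods `{p_2,…,p_n} ∪ S`, `|S| = c + 1 ≤ 4`
(agent 1 values each good of `S` at `1/(c+1)` and each `p_i` at `0`; agent `i ≥ 2`
values `p_i` at `1`, each good of `S` at `1 + ε`, all else `0`), every EFX₀ complete
allocation in which all agents have positive utility satisfies `|A_1 ∩ S| ≤ 2`.
Goods are encoded as `Fin (n-1) ⊕ Fin (c+1)`: `Sum.inr s` are the goods of `S`. -/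
theorem EFX0_agent_one_few_common_goods
    (n c : ℕ) (hn : 2 ≤ n) (hc : c ≤ 3) (ε : ℝ) (hε : 0 < ε)
    (v : Fin n → (Fin (n - 1) ⊕ Fin (c + 1)) → ℝ)
    (hv0S : ∀ s : Fin (c + 1), v ⟨0, by omega⟩ (Sum.inr s) = 1 / (c + 1))
    (hv0p : ∀ j : Fin (n - 1), v ⟨0, by omega⟩ (Sum.inl j) = 0)
    (hvip : ∀ i : Fin n, (i : ℕ) ≠ 0 → ∀ j : Fin (n - 1),
        v i (Sum.inl j) = if (j : ℕ) + 1 = (i : ℕ) then 1 else 0)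
    (hviS : ∀ i : Fin n, (i : ℕ) ≠ 0 → ∀ s : Fin (c + 1),
        v i (Sum.inr s) = 1 + ε)
    (A : Fin n → Finset (Fin (n - 1) ⊕ Fin (c + 1)))
    (hcomp : ∀ g, ∃! i : Fin n, g ∈ A i)
    (hEFX0 : ∀ i j : Fin n, A j ≠ ∅ → ∀ g ∈ A j,
        ∑ h ∈ (A j).erase g, v i h ≤ ∑ h ∈ A i, v i h)
    (hposutil : ∀ i : Fin n, 0 < ∑ g ∈ A i, v i g) :
    ((A ⟨0, by omega⟩).filter (fun g => g.isRight = true)).card ≤ 2 := by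
  by_contra hcard
  push_neg at hcard
  set i0 : Fin n := ⟨0, by omega⟩ with hi0
  set i1 : Fin n := ⟨1, by omega⟩ with hi1
  have hi1ne : (i1 : ℕ) ≠ 0 := by simp [hi1]
  set F0 := (A i0).filter (fun g => g.isRight = true) with hF0
  set F1 := (A i1).filter (fun g => g.isRight = true) with hF1
  have hne : i0 ≠ i1 := by
    intro h; exact absurd (congrArg Fin.val h) (by simp [hi0, hi1])
  -- disjointness of S-goods in the two bundles
  have hdisj : Disjoint F0 F1 := by
    rw [Finset.disjoint_left]
    intro g hg0 hg1
    have h0 := (Finset.mem_filter.mp hg0).1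
    have h1 := (Finset.mem_filter.mp hg1).1
    obtain ⟨i, _, huniq⟩ := hcomp g
    exact hne ((huniq i0 h0).trans (huniq i1 h1).symm)
  -- total number of S-goods is c+1
  have hT : (Finset.univ.filter
      (fun g : Fin (n - 1) ⊕ Fin (c + 1) => g.isRight = true)).card = c + 1 := by
    have : (Finset.univ.filter
        (fun g : Fin (n - 1) ⊕ Fin (c + 1) => g.isRight = true)) =
        (Finset.univ : Finset (Fin (c + 1))).map
          ⟨Sum.inr, Sum.inr_injective⟩ := by
      ext g; cases g <;> simp
    simp [this]
  have hsub : F0 ∪ F1 ⊆ Finset.univ.filter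
      (fun g : Fin (n - 1) ⊕ Fin (c + 1) => g.isRight = true) := by
    intro g hg
    rcases Finset.mem_union.mp hg with h | h <;>
      simp [Finset.mem_filter.mp h]
  have hcards : F0.card + F1.card ≤ c + 1 := by
    calc F0.card + F1.card = (F0 ∪ F1).card :=
          (Finset.card_union_of_disjoint hdisj).symm
      _ ≤ c + 1 := le_trans (Finset.card_le_card hsub) (le_of_eq hT)
  have hF1card : F1.card ≤ 1 := by omega
  -- pick g ∈ A i0 ∩ S
  have hF0ne : F0.Nonempty := Finset.card_pos.mp (by omega)
  obtain ⟨g, hg⟩ := hF0ne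
  have hgA : g ∈ A i0 := (Finset.mem_filter.mp hg).1
  -- nonnegativity of agent i1's values
  have hnonneg : ∀ h : Fin (n - 1) ⊕ Fin (c + 1), 0 ≤ v i1 h := by
    intro h
    cases h with
    | inl j => rw [hvip i1 hi1ne j]; split <;> norm_num
    | inr s => rw [hviS i1 hi1ne s]; linarith
  -- lower bound: v i1 (A i0 \ {g}) ≥ 2 + 2ε
  have hlow : 2 + 2 * ε ≤ ∑ h ∈ (A i0).erase g, v i1 h := by
    have hsub' : F0.erase g ⊆ (A i0).erase g :=
      Finset.erase_subset_erase g (Finset.filter_subset _ _)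
    have hval : ∑ h ∈ F0.erase g, v i1 h = (F0.erase g).card * (1 + ε) := by
      rw [Finset.sum_congr rfl (fun h hh => ?_), Finset.sum_const, nsmul_eq_mul]
      have hhF : h ∈ F0 := Finset.mem_of_mem_erase hh
      have : h.isRight = true := (Finset.mem_filter.mp hhF).2
      obtain ⟨s, rfl⟩ := Sum.isRight_iff.mp this
      exact hviS i1 hi1ne s
    have hcardge : 2 ≤ (F0.erase g).card := by
      rw [Finset.card_erase_of_mem hg]; omega
    have h2 : (2 : ℝ) * (1 + ε) ≤ (F0.erase g).card * (1 + ε) := by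
      apply mul_le_mul_of_nonneg_right _ (by linarith)
      exact_mod_cast hcardge
    have h3 : ∑ h ∈ F0.erase g, v i1 h ≤ ∑ h ∈ (A i0).erase g, v i1 h :=
      Finset.sum_le_sum_of_subset_of_nonneg hsub' (fun h _ _ => hnonneg h)
    linarith [hval ▸ h3]
  -- upper bound: v i1 (A i1) ≤ 2 + ε
  have hup : ∑ h ∈ A i1, v i1 h ≤ 2 + ε := by
    rw [← Finset.sum_filter_add_sum_filter_not (A i1)
      (fun g => g.isRight = true)]
    have hupS : ∑ h ∈ F1, v i1 h ≤ 1 + ε := by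
      have hval : ∑ h ∈ F1, v i1 h = F1.card * (1 + ε) := by
        rw [Finset.sum_congr rfl (fun h hh => ?_), Finset.sum_const, nsmul_eq_mul]
        have : h.isRight = true := (Finset.mem_filter.mp hh).2
        obtain ⟨s, rfl⟩ := Sum.isRight_iff.mp this
        exact hviS i1 hi1ne s
      rw [hval]
      have : (F1.card : ℝ) ≤ 1 := by exact_mod_cast hF1card
      nlinarith
    have hupP : ∑ h ∈ (A i1).filter (fun g => ¬ g.isRight = true), v i1 h ≤ 1 := by
      set a : Fin (n - 1) ⊕ Fin (c + 1) := Sum.inl ⟨0, by omega⟩ with ha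
      have hle : ∀ h ∈ (A i1).filter (fun g => ¬ g.isRight = true),
          v i1 h ≤ if h = a then 1 else 0 := by
        intro h hh
        have hnr : ¬ h.isRight = true := (Finset.mem_filter.mp hh).2
        cases h with
        | inr s => simp at hnr
        | inl j =>
          rw [hvip i1 hi1ne j]
          by_cases hj : (j : ℕ) + 1 = (i1 : ℕ)
          · have : Sum.inl j = a := by
              rw [ha]
              congr 1
              apply Fin.ext
              simp [hi1] at hj
              simpa using hj
            simp [hj, this]
          · have : Sum.inl j ≠ a := by
              rw [ha]; intro hcontra
              apply hj
              have := Sum.inl.inj hcontra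
              simp [hi1, this]
            simp [hj, this]
      calc ∑ h ∈ (A i1).filter (fun g => ¬ g.isRight = true), v i1 h
          ≤ ∑ h ∈ (A i1).filter (fun g => ¬ g.isRight = true),
              (if h = a then 1 else 0) := Finset.sum_le_sum hle
        _ ≤ 1 := by rw [Finset.sum_ite_eq']; split <;> norm_num
    linarith
  -- EFX0 contradiction
  have hA0ne : A i0 ≠ ∅ := Finset.ne_empty_of_mem hgA
  have := hEFX0 i1 i0 hA0ne g hgA
  linarith
end
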